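/- arXiv:2503.03328 — 3 statements merged into one kernel-verified Lean document; each statement's English description precedes it below -/
import Mathlib

section
/- For every dimension n ≥ 1, every x ∈ R^n, every λ ∈ R, and every ε ∈ (0,1), the energy function satisfies Φ_{n,λ}(x) ≥ (1−ε²)^{n/2} · exp(ε‖λx‖). -/
/-!
Fix a unit vector `v`, put `t = ⟪u, v⟫` and `S_k(r) = E[t ^ k e ^ (r t)]`; by rotation invariance
`Φ_{n,λ}(x) = S₀(‖λ x‖)`. Rotation invariance also gives `E t = 0` and, by differentiating
`E[exp(r t + s ⟪u, w⟫)] = S₀(√(r² + s²))` twice in `s` for unit `w ⊥ v` and summing over an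
orthonormal basis, the Bessel-type equation `r S₀ = r S₂ + (n - 1) S₁`. With the integrating factor
`r ^ (n - 1)` the equation yields the Riccati inequality `r (1 - α²) ≤ n α` for the logarithmic
derivative `α = S₁ / S₀`, which makes `log S₀(r) - r α(r) - (n / 2) log (1 - α(r)²)` nondecreasing.
At the point `m` where `α(m) = ε` this gives `log S₀(m) ≥ ε m + (n / 2) log (1 - ε²)`, and
convexity of `log S₀` carries the bound `log S₀(r) ≥ ε r + (n / 2) log (1 - ε²)` to every `r`.
-/

open MeasureTheory Real
open scoped RealInnerProductSpace

open ProbabilityTheory Set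

lemma add_mul_sub_le_of_monotone_deriv {f f' : ℝ → ℝ} (hf : ∀ x, HasDerivAt f (f' x) x)
    (hf' : Monotone f') (x y : ℝ) : f x + f' x * (y - x) ≤ f y := by
  have hconv : ConvexOn ℝ univ f := by
    refine Monotone.convexOn_univ_of_deriv (fun z => (hf z).differentiableAt) ?_
    simpa only [funext fun z => (hf z).deriv] using hf'
  rcases lt_trichotomy x y with hxy | rfl | hxy
  · have := hconv.le_slope_of_hasDerivAt trivial trivial hxy (hf x)
    rw [slope_def_field, le_div_iff₀ (sub_pos.2 hxy)] at this
    linarith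
  · simp
  · have := hconv.slope_le_of_hasDerivAt trivial trivial hxy (hf x)
    rw [slope_def_field, div_le_iff₀ (sub_pos.2 hxy)] at this
    linarith

lemma hasDerivAt_sqrt_sq_add_sq {r : ℝ} (hr : r ≠ 0) (s : ℝ) :
    HasDerivAt (fun s => √(r ^ 2 + s ^ 2)) (s / √(r ^ 2 + s ^ 2)) s := by
  refine (((hasDerivAt_id' s).fun_pow 2).const_add (r ^ 2)).sqrt (by positivity) |>.congr_deriv ?_
  field_simp
  norm_num

section Riccati

variable {L α β : ℝ → ℝ} {N : ℝ}

lemma mul_add_log_one_sub_sq_le (hL : ∀ t, HasDerivAt L (α t) t)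
    (hα : ∀ t, HasDerivAt α (β t) t) (hβ : ∀ t, 0 ≤ β t) (hL0 : L 0 = 0) (hα0 : α 0 = 0)
    (hriccati : ∀ t, 0 ≤ t → t * (1 - α t ^ 2) ≤ N * α t) {m : ℝ} (hm : 0 ≤ m) (hαm : α m < 1) :
    m * α m + N / 2 * log (1 - α m ^ 2) ≤ L m := by
  have hmono : Monotone α := monotone_of_hasDerivAt_nonneg hα hβ
  have hpos : ∀ t ∈ Icc 0 m, 0 < 1 - α t ^ 2 := fun t ht => by
    have h0 : 0 ≤ α t := hα0 ▸ hmono ht.1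
    have h1 : α t < 1 := (hmono ht.2).trans_lt hαm
    nlinarith
  set ψ := fun t => L t - t * α t - N / 2 * log (1 - α t ^ 2)
  have hψ : ∀ t ∈ Icc 0 m, HasDerivAt ψ (β t * (N * α t / (1 - α t ^ 2) - t)) t := by
    intro t ht
    refine (((hL t).fun_sub ((hasDerivAt_id' t).fun_mul (hα t))).fun_sub
      (((((hα t).fun_pow 2).const_sub 1).log (hpos t ht).ne').const_mul (N / 2))).congr_deriv ?_
    field_simp [(hpos t ht).ne']
    ring
  have hψmono : MonotoneOn ψ (Icc 0 m) := by
    refine monotoneOn_of_hasDerivWithinAt_nonneg (convex_Icc 0 m)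
      (fun t ht => (hψ t ht).continuousAt.continuousWithinAt)
      (fun t ht => (hψ t (interior_subset ht)).hasDerivWithinAt) fun t ht => ?_
    have ht' := interior_subset ht
    refine mul_nonneg (hβ t) (sub_nonneg.2 ?_)
    rw [le_div_iff₀ (hpos t ht')]
    exact hriccati t ht'.1
  have := hψmono ⟨le_rfl, hm⟩ ⟨hm, le_rfl⟩ hm
  norm_num [ψ, hL0, hα0] at this
  linarith

lemma mul_add_log_le_of_riccati (hN : 0 < N) (hL : ∀ t, HasDerivAt L (α t) t)
    (hα : ∀ t, HasDerivAt α (β t) t) (hβ : ∀ t, 0 ≤ β t) (hL0 : L 0 = 0) (hα0 : α 0 = 0)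
    (hriccati : ∀ t, 0 ≤ t → t * (1 - α t ^ 2) ≤ N * α t) {ε : ℝ} (hε : ε ∈ Ioo 0 1)
    (r : ℝ) :
    ε * r + N / 2 * log (1 - ε ^ 2) ≤ L r := by
  obtain ⟨hε0, hε1⟩ := hε
  have hmono : Monotone α := monotone_of_hasDerivAt_nonneg hα hβ
  have hε2 : 0 < 1 - ε ^ 2 := by nlinarith
  set R := N * ε / (1 - ε ^ 2)
  have hR : 0 ≤ R := by positivity
  have hεR : ε ≤ α R := by
    by_contra! h
    have hαR : 0 ≤ α R := hα0 ▸ hmono hR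
    have : N * ε < N * ε := calc
      N * ε = R * (1 - ε ^ 2) := (div_mul_cancel₀ _ hε2.ne').symm
      _ ≤ R * (1 - α R ^ 2) := by gcongr
      _ ≤ N * α R := hriccati R hR
      _ < N * ε := by gcongr
    exact lt_irrefl _ this
  obtain ⟨m, ⟨hm, -⟩, hαm⟩ : ∃ m ∈ Icc 0 R, α m = ε :=
    intermediate_value_Icc hR (fun t _ => (hα t).continuousAt.continuousWithinAt)
      ⟨by rw [hα0]; exact hε0.le, hεR⟩
  have henv := mul_add_log_one_sub_sq_le hL hα hβ hL0 hα0 hriccati hm (hαm ▸ hε1)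
  have htangent := add_mul_sub_le_of_monotone_deriv hL hmono m r
  rw [hαm] at henv htangent
  linarith

end Riccati

section Bessel

variable {S₀ S₁ S₂ : ℝ → ℝ} {N : ℝ}

lemma mul_sq_sub_sq_le_of_ode (hS₀ : ∀ t, HasDerivAt S₀ (S₁ t) t)
    (hS₁ : ∀ t, HasDerivAt S₁ (S₂ t) t) (hS₁0 : S₁ 0 = 0) (hN : 1 ≤ N)
    (hode : ∀ t, 0 < t → t * S₀ t = t * S₂ t + (N - 1) * S₁ t) {t : ℝ} (ht : 0 ≤ t) :
    t * (S₀ t ^ 2 - S₁ t ^ 2) ≤ N * (S₀ t * S₁ t) := by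
  set V := fun t => t * (S₀ t ^ 2 - S₁ t ^ 2) - N * (S₀ t * S₁ t)
  have hV : ∀ t, HasDerivAt V ((S₀ t ^ 2 - S₁ t ^ 2) + t * (2 * S₀ t * S₁ t - 2 * S₁ t * S₂ t)
      - N * (S₁ t * S₁ t + S₀ t * S₂ t)) t := fun t => by
    refine ((hasDerivAt_id' t).fun_mul (((hS₀ t).fun_pow 2).fun_sub ((hS₁ t).fun_pow 2))).fun_sub
      (((hS₀ t).fun_mul (hS₁ t)).const_mul N) |>.congr_deriv ?_
    ring
  set W := fun t => t ^ (N - 1) * V t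
  have hW : ∀ t, 0 < t → HasDerivAt W (-(2 * t ^ (N - 1) * S₁ t ^ 2)) t := fun t ht => by
    refine ((hasDerivAt_rpow_const (Or.inl ht.ne')).fun_mul (hV t)).congr_deriv ?_
    rw [rpow_sub_one ht.ne']
    field_simp
    simp only [V]
    linear_combination (N * S₀ t + 2 * t * S₁ t) * (hode t ht)
  have hWanti : AntitoneOn W (Ici 0) := by
    refine antitoneOn_of_hasDerivWithinAt_nonpos (convex_Ici 0)
      ((continuous_rpow_const (by linarith)).continuousOn.mul
        fun t _ => (hV t).continuousAt.continuousWithinAt)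
      (fun t ht => (hW t (by simpa using ht)).hasDerivWithinAt) fun t ht => ?_
    have : 0 ≤ t ^ (N - 1) := rpow_nonneg (interior_subset ht) _
    nlinarith [sq_nonneg (S₁ t)]
  rcases ht.eq_or_lt with rfl | ht
  · simp [hS₁0]
  have hWt : t ^ (N - 1) * V t ≤ t ^ (N - 1) * 0 := by
    simpa [W, V, hS₁0] using hWanti (mem_Ici.2 le_rfl) (mem_Ici.2 ht.le) ht.le
  have := le_of_mul_le_mul_left hWt (rpow_pos_of_pos ht _)
  simp only [V] at this
  linarith

theorem rpow_mul_exp_le_of_ode (hS₀ : ∀ t, HasDerivAt S₀ (S₁ t) t)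
    (hS₁ : ∀ t, HasDerivAt S₁ (S₂ t) t) (hpos : ∀ t, 0 < S₀ t) (hS₀0 : S₀ 0 = 1) (hS₁0 : S₁ 0 = 0)
    (hCS : ∀ t, S₁ t ^ 2 ≤ S₀ t * S₂ t) (hN : 1 ≤ N)
    (hode : ∀ t, 0 < t → t * S₀ t = t * S₂ t + (N - 1) * S₁ t) {ε : ℝ} (hε : ε ∈ Ioo 0 1)
    (r : ℝ) :
    (1 - ε ^ 2) ^ (N / 2) * exp (ε * r) ≤ S₀ r := by
  have hriccati (t : ℝ) (ht : 0 ≤ t) : t * (1 - (S₁ t / S₀ t) ^ 2) ≤ N * (S₁ t / S₀ t) := by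
    have hV := mul_sq_sub_sq_le_of_ode hS₀ hS₁ hS₁0 hN hode ht
    have hS := hpos t
    rw [div_pow, one_sub_div (by positivity), mul_div_assoc', mul_div_assoc',
      div_le_div_iff₀ (by positivity) hS]
    nlinarith
  have key := mul_add_log_le_of_riccati (L := fun t => log (S₀ t)) (by linarith)
    (fun t => (hS₀ t).log (hpos t).ne') (fun t => (hS₁ t).div (hS₀ t) (hpos t).ne')
    (fun t => div_nonneg (by nlinarith [hCS t]) (sq_nonneg _)) (by simp [hS₀0]) (by simp [hS₁0])
    hriccati hε r
  have hε2 : 0 < 1 - ε ^ 2 := by nlinarith [hε.1, hε.2]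
  calc (1 - ε ^ 2) ^ (N / 2) * exp (ε * r) = exp (ε * r + N / 2 * log (1 - ε ^ 2)) := by
        rw [rpow_def_of_pos hε2, ← exp_add]; ring_nf
    _ ≤ exp (log (S₀ r)) := exp_le_exp.2 key
    _ = S₀ r := exp_log (hpos r)

end Bessel

section MGF

variable {Ω : Type*} {mΩ : MeasurableSpace Ω} {μ : Measure Ω} {X : Ω → ℝ}

lemma integrableExpSet_eq_univ_of_mem_Icc [IsFiniteMeasure μ] {a b : ℝ} (hX : AEMeasurable X μ)
    (hb : ∀ᵐ ω ∂μ, X ω ∈ Icc a b) : integrableExpSet X μ = univ :=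
  eq_univ_of_forall fun _ => integrable_exp_mul_of_mem_Icc hX hb

lemma sq_integral_mul_exp_le_mgf_mul [IsProbabilityMeasure μ] {t : ℝ}
    (ht : t ∈ interior (integrableExpSet X μ)) :
    μ[fun ω => X ω * exp (t * X ω)] ^ 2 ≤ mgf X μ t * μ[fun ω => X ω ^ 2 * exp (t * X ω)] := by
  have hmgf : 0 < mgf X μ t := mgf_pos (interior_subset (s := integrableExpSet X μ) ht)
  have hvar : 0 ≤ iteratedDeriv 2 (cgf X μ) t := by
    rw [iteratedDeriv_two_cgf_eq_integral ht]
    exact div_nonneg (integral_nonneg fun ω => by positivity) hmgf.le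
  rw [iteratedDeriv_two_cgf ht, deriv_cgf ht, div_pow, sub_nonneg,
    div_le_div_iff₀ (by positivity) hmgf] at hvar
  nlinarith

lemma hasDerivAt_integral_pow_mul_exp_add [IsFiniteMeasure μ] {Y : Ω → ℝ} {c d : ℝ}
    (hX : Measurable X) (hexp : Integrable (fun ω => exp (X ω)) μ) (hY : AEMeasurable Y μ)
    (hYb : ∀ᵐ ω ∂μ, Y ω ∈ Icc c d) (k : ℕ) (s : ℝ) :
    HasDerivAt (fun s => ∫ ω, Y ω ^ k * exp (X ω + s * Y ω) ∂μ)
      (∫ ω, Y ω ^ (k + 1) * exp (X ω + s * Y ω) ∂μ) s := by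
  set ν := μ.withDensity fun ω => ENNReal.ofReal (exp (X ω))
  have : IsFiniteMeasure ν := isFiniteMeasure_withDensity_ofReal hexp.hasFiniteIntegral
  have hν : ν ≪ μ := withDensity_absolutelyContinuous μ _
  have hs : s ∈ interior (integrableExpSet Y ν) := by
    rw [integrableExpSet_eq_univ_of_mem_Icc (hY.mono_ac hν) (hν.ae_le hYb)]
    simp
  have hν_integral (j : ℕ) (s : ℝ) :
      ∫ ω, Y ω ^ j * exp (s * Y ω) ∂ν = ∫ ω, Y ω ^ j * exp (X ω + s * Y ω) ∂μ := by
    rw [integral_withDensity_eq_integral_toReal_smul hX.exp.ennreal_ofReal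
      (ae_of_all _ fun _ => ENNReal.ofReal_lt_top)]
    congr with ω
    rw [ENNReal.toReal_ofReal (exp_pos _).le, smul_eq_mul, exp_add]
    ring
  simpa only [hν_integral] using hasDerivAt_integral_pow_mul_exp_real hs k

theorem rpow_mul_exp_le_mgf_of_ode [IsProbabilityMeasure μ] {a b N ε : ℝ} (hX : AEMeasurable X μ)
    (hb : ∀ᵐ ω ∂μ, X ω ∈ Icc a b) (hmean : μ[X] = 0) (hN : 1 ≤ N)
    (hode : ∀ t, 0 < t → t * mgf X μ t =
      t * μ[fun ω => X ω ^ 2 * exp (t * X ω)] + (N - 1) * μ[fun ω => X ω * exp (t * X ω)])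
    (hε : ε ∈ Ioo 0 1) (r : ℝ) :
    (1 - ε ^ 2) ^ (N / 2) * exp (ε * r) ≤ mgf X μ r := by
  have hI (t : ℝ) : t ∈ interior (integrableExpSet X μ) := by
    simp [integrableExpSet_eq_univ_of_mem_Icc hX hb]
  refine rpow_mul_exp_le_of_ode (fun t => hasDerivAt_mgf (hI t))
    (fun t => by simpa using hasDerivAt_integral_pow_mul_exp_real (hI t) 1)
    (fun t => mgf_pos (interior_subset (s := integrableExpSet X μ) (hI t))) mgf_zero
    (by simpa using hmean) (fun t => sq_integral_mul_exp_le_mgf_mul (hI t)) hN hode hε r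

end MGF

section RotationInvariant

variable {E : Type*} [NormedAddCommGroup E] [InnerProductSpace ℝ E] [MeasurableSpace E]
  {μ : Measure E}

lemma ae_inner_mem_Icc (hsupp : ∀ᵐ u ∂μ, ‖u‖ = 1) {v : E} (hv : ‖v‖ = 1) :
    ∀ᵐ u ∂μ, ⟪u, v⟫ ∈ Icc (-1) 1 := by
  filter_upwards [hsupp] with u hu
  exact abs_le.1 (by simpa [hu, hv] using abs_real_inner_le_norm u v)

variable [BorelSpace E]

lemma integral_comp_inner_eq_of_norm_eq (hrot : ∀ e : E ≃ₗᵢ[ℝ] E, μ.map e = μ) (f : ℝ → ℝ)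
    {y y' : E} (h : ‖y‖ = ‖y'‖) : ∫ u, f ⟪u, y⟫ ∂μ = ∫ u, f ⟪u, y'⟫ ∂μ := by
  set e := (ℝ ∙ (y - y'))ᗮ.reflection
  have hey : e y = y' := Submodule.reflection_sub h
  calc ∫ u, f ⟪u, y⟫ ∂μ = ∫ u, f ⟪e u, y'⟫ ∂μ := by
        simp_rw [← hey, LinearIsometryEquiv.inner_map_map]
    _ = ∫ u, f ⟪u, y'⟫ ∂μ :=
      MeasurePreserving.integral_comp' (f := e.toHomeomorph.toMeasurableEquiv)
        ⟨e.continuous.measurable, hrot e⟩ fun u => f ⟪u, y'⟫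

lemma integral_inner_eq_zero (hrot : ∀ e : E ≃ₗᵢ[ℝ] E, μ.map e = μ) (v : E) :
    ∫ u, ⟪u, v⟫ ∂μ = 0 := by
  have := integral_comp_inner_eq_of_norm_eq hrot id (norm_neg v).symm
  simp only [id, inner_neg_right, integral_neg] at this
  linarith

lemma integral_exp_add_eq_mgf (hrot : ∀ e : E ≃ₗᵢ[ℝ] E, μ.map e = μ) {v w : E} (hv : ‖v‖ = 1)
    (hw : ‖w‖ = 1) (hvw : ⟪v, w⟫ = 0) (r s : ℝ) :
    ∫ u, exp (r * ⟪u, v⟫ + s * ⟪u, w⟫) ∂μ = mgf (fun u => ⟪u, v⟫) μ √(r ^ 2 + s ^ 2) := by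
  have hnorm : ‖r • v + s • w‖ = ‖√(r ^ 2 + s ^ 2) • v‖ := by
    rw [norm_smul, hv, mul_one, norm_of_nonneg (sqrt_nonneg _), ← sqrt_sq (norm_nonneg _), sq,
      norm_add_sq_eq_norm_sq_add_norm_sq_real (by simp [real_inner_smul_left,
        real_inner_smul_right, hvw])]
    simp [norm_smul, hv, hw, sq]
  simpa [mgf, inner_add_right, real_inner_smul_right] using
    integral_comp_inner_eq_of_norm_eq hrot exp hnorm

/- Both sides of `integral_exp_add_eq_mgf` are differentiated twice in `s` at `s = 0`:
on the left under the integral sign, on the right through the chain rule. -/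
lemma mul_integral_inner_sq_mul_exp [IsProbabilityMeasure μ]
    (hrot : ∀ e : E ≃ₗᵢ[ℝ] E, μ.map e = μ) (hsupp : ∀ᵐ u ∂μ, ‖u‖ = 1) {v w : E}
    (hv : ‖v‖ = 1) (hw : ‖w‖ = 1) (hvw : ⟪v, w⟫ = 0) {r : ℝ} (hr : 0 < r) :
    r * ∫ u, ⟪u, w⟫ ^ 2 * exp (r * ⟪u, v⟫) ∂μ = ∫ u, ⟪u, v⟫ * exp (r * ⟪u, v⟫) ∂μ := by
  set X : E → ℝ := fun u => ⟪u, v⟫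
  have hXm : Measurable X := (continuous_id.inner continuous_const).measurable
  have hYm : AEMeasurable (fun u => ⟪u, w⟫) μ :=
    (continuous_id.inner continuous_const).measurable.aemeasurable
  have hXb := ae_inner_mem_Icc hsupp hv
  have hYb := ae_inner_mem_Icc hsupp hw
  have hI (t : ℝ) : t ∈ interior (integrableExpSet X μ) := by
    simp [integrableExpSet_eq_univ_of_mem_Icc hXm.aemeasurable hXb]
  have hexp : Integrable (fun u => exp (r * X u)) μ :=
    integrable_exp_mul_of_mem_Icc hXm.aemeasurable hXb
  set ρ : ℝ → ℝ := fun s => √(r ^ 2 + s ^ 2)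
  have hρpos (s : ℝ) : 0 < ρ s := sqrt_pos.2 (by positivity)
  have hρ (s : ℝ) : HasDerivAt ρ (s / ρ s) s := hasDerivAt_sqrt_sq_add_sq hr.ne' s
  have hρ0 : ρ 0 = r := by simp [ρ, sqrt_sq hr.le]
  have hradial : (fun s => ∫ u, ⟪u, w⟫ ^ 0 * exp (r * X u + s * ⟪u, w⟫) ∂μ) = mgf X μ ∘ ρ := by
    ext s
    simpa using integral_exp_add_eq_mgf hrot hv hw hvw r s
  have hfirst (s : ℝ) : ∫ u, ⟪u, w⟫ ^ 1 * exp (r * X u + s * ⟪u, w⟫) ∂μ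
      = μ[fun u => X u * exp (ρ s * X u)] * (s / ρ s) := by
    have h := hasDerivAt_integral_pow_mul_exp_add (hXm.const_mul r) hexp hYm hYb 0 s
    rw [hradial] at h
    exact h.unique ((hasDerivAt_mgf (hI _)).comp s (hρ s))
  have hS₁ (t : ℝ) : HasDerivAt (fun t => μ[fun u => X u * exp (t * X u)])
      μ[fun u => X u ^ 2 * exp (t * X u)] t := by
    simpa using hasDerivAt_integral_pow_mul_exp_real (hI t) 1
  have hleft := hasDerivAt_integral_pow_mul_exp_add (hXm.const_mul r) hexp hYm hYb 1 0
  rw [funext hfirst] at hleft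
  have hright := ((hS₁ (ρ 0)).comp 0 (hρ 0)).mul ((hasDerivAt_id' 0).div (hρ 0) (hρpos 0).ne')
  have h := hleft.unique hright
  simp only [Function.comp_apply, hρ0, zero_mul, add_zero, zero_div, mul_zero, zero_add, one_mul,
    sub_zero] at h
  change r * ∫ u, ⟪u, w⟫ ^ (1 + 1) * exp (r * X u) ∂μ = ∫ u, X u * exp (r * X u) ∂μ
  rw [h]
  field_simp

lemma mul_mgf_inner_eq [IsProbabilityMeasure μ]
    (hrot : ∀ e : E ≃ₗᵢ[ℝ] E, μ.map e = μ) (hsupp : ∀ᵐ u ∂μ, ‖u‖ = 1) {ι : Type*} [Fintype ι]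
    [DecidableEq ι] (b : OrthonormalBasis ι ℝ E) (i : ι) {r : ℝ} (hr : 0 < r) :
    r * mgf (fun u => ⟪u, b i⟫) μ r = r * ∫ u, ⟪u, b i⟫ ^ 2 * exp (r * ⟪u, b i⟫) ∂μ
      + (Fintype.card ι - 1) * ∫ u, ⟪u, b i⟫ * exp (r * ⟪u, b i⟫) ∂μ := by
  have hparseval : ∀ᵐ u ∂μ, ∑ j, ⟪u, b j⟫ ^ 2 = 1 := by
    filter_upwards [hsupp] with u hu
    simpa [sq, real_inner_comm, hu] using b.sum_inner_mul_inner u u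
  have hint (j : ι) : Integrable (fun u => ⟪u, b j⟫ ^ 2 * exp (r * ⟪u, b i⟫)) μ := by
    refine (integrable_exp_mul_of_mem_Icc
      (continuous_id.inner continuous_const).measurable.aemeasurable
      (ae_inner_mem_Icc hsupp (b.orthonormal.1 i))).bdd_mul (c := 1)
      (by fun_prop) ?_
    filter_upwards [ae_inner_mem_Icc hsupp (b.orthonormal.1 j)] with u hu
    simpa [abs_le] using hu
  have hsum : mgf (fun u => ⟪u, b i⟫) μ r = ∑ j, ∫ u, ⟪u, b j⟫ ^ 2 * exp (r * ⟪u, b i⟫) ∂μ := by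
    rw [← integral_finsetSum _ fun j _ => hint j, mgf]
    refine integral_congr_ae ?_
    filter_upwards [hparseval] with u hu
    rw [← Finset.sum_mul, hu, one_mul]
  have hother : ∀ j ∈ Finset.univ.erase i, r * ∫ u, ⟪u, b j⟫ ^ 2 * exp (r * ⟪u, b i⟫) ∂μ
      = ∫ u, ⟪u, b i⟫ * exp (r * ⟪u, b i⟫) ∂μ := fun j hj =>
    mul_integral_inner_sq_mul_exp hrot hsupp (b.orthonormal.1 i) (b.orthonormal.1 j)
      (b.orthonormal.2 (Finset.ne_of_mem_erase hj).symm) hr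
  rw [hsum, ← Finset.add_sum_erase _ _ (Finset.mem_univ i), mul_add, Finset.mul_sum,
    Finset.sum_congr rfl hother, Finset.sum_const, Finset.card_erase_of_mem (Finset.mem_univ i),
    Finset.card_univ, nsmul_eq_mul, Nat.cast_sub (Fintype.card_pos_iff.2 ⟨i⟩)]
  simp

end RotationInvariant

/-- Exponential growth lower bound for the AMGF energy function:
`Φ_{n,λ}(x) ≥ (1-ε²)^{n/2} exp(ε‖λx‖)` for every `ε ∈ (0,1)`. -/
theorem amgf_energy_exponential_growth
    (n : ℕ) (hn : 1 ≤ n) (lam : ℝ)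
    (μ : Measure (EuclideanSpace ℝ (Fin n))) [IsProbabilityMeasure μ]
    (hsupp : ∀ᵐ ℓ ∂μ, ‖ℓ‖ = 1)
    (hrot : ∀ e : EuclideanSpace ℝ (Fin n) ≃ₗᵢ[ℝ] EuclideanSpace ℝ (Fin n),
      μ.map e = μ)
    (x : EuclideanSpace ℝ (Fin n)) (ε : ℝ) (hε : ε ∈ Set.Ioo (0:ℝ) 1) :
    (1 - ε ^ 2) ^ ((n : ℝ) / 2) * Real.exp (ε * ‖lam • x‖)
      ≤ ∫ u, Real.exp (lam * ⟪u, x⟫) ∂μ := by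
  set b := EuclideanSpace.basisFun (Fin n) ℝ
  set i : Fin n := ⟨0, hn⟩
  have hv : ‖b i‖ = 1 := b.orthonormal.1 i
  have hmgf : ∫ u, exp (lam * ⟪u, x⟫) ∂μ = mgf (fun u => ⟪u, b i⟫) μ ‖lam • x‖ := by
    simpa [mgf, real_inner_smul_right, mul_comm] using
      integral_comp_inner_eq_of_norm_eq hrot exp (y := lam • x) (y' := ‖lam • x‖ • b i)
        (by simp [norm_smul, hv])
  rw [hmgf]
  refine rpow_mul_exp_le_mgf_of_ode (continuous_id.inner continuous_const).aemeasurable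
    (ae_inner_mem_Icc hsupp hv) (integral_inner_eq_zero hrot _) (by exact_mod_cast hn)
    (fun r hr => by simpa using mul_mgf_inner_eq hrot hsupp b i hr) hε _
end

section
/- Let {S_t}_{t=0,…,T} be a discrete-time process in R^n with S_0 = 0, S_{t+1} = β_t + w_t, where ‖β_t‖ ≤ ‖S_t‖ almost surely (β_t measurable with respect to the history up to time t) and w_t ∼ subG(σ²) is independent of the history. Then for every λ ∈ R and every t, E[Φ_{n,λ}(S_{t+1}) | S_t] ≤ exp(λ²σ²/2) · Φ_{n,λ}(S_t), i.e., Φ_{n,λ}(S_t) is an affine martingale with a_t = exp(λ²σ²/2) and b_t = 0. -/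
/-!
Write `Φ x = ∫ exp (λ⟪u, x⟫) dμ(u)`. For an `ℱ_t`-measurable set `s`, Tonelli and the independence
of `w_t` from `ℱ_t` give
`∫_s Φ (β_t + w_t) dP = ∫ (∫_s exp (λ⟪u, β_t⟫) dP) · E[exp (λ⟪u, w_t⟫)] dμ(u)`,
and the sub-Gaussian bound in each unit direction `u` bounds this by `exp (λ²σ²/2) ∫_s Φ β_t dP`.
Hence `E[Φ S_{t+1} | ℱ_t] ≤ exp (λ²σ²/2) Φ β_t`. Rotation invariance of `μ` makes `Φ x` depend on
`‖x‖` only and equal to `∫ cosh (λ⟪u, x⟫) dμ(u)`, so `Φ` is nondecreasing in `‖x‖` and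
`Φ β_t ≤ Φ S_t` almost surely.
-/

open MeasureTheory Real ProbabilityTheory
open scoped RealInnerProductSpace ENNReal

section Integration

variable {Ω : Type*} {m mΩ : MeasurableSpace Ω} {P : Measure Ω}

lemma setLIntegral_mul_eq_of_indep {m' : MeasurableSpace Ω} (hm : m ≤ mΩ) (hm' : m' ≤ mΩ)
    (hind : Indep m' m P) {f g : Ω → ℝ≥0∞} (hf : Measurable[m] f) (hg : Measurable[m'] g)
    {s : Set Ω} (hs : MeasurableSet[m] s) :
    ∫⁻ ω in s, f ω * g ω ∂P = (∫⁻ ω in s, f ω ∂P) * ∫⁻ ω, g ω ∂P := by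
  rw [← lintegral_indicator (hm s hs), ← lintegral_indicator (hm s hs)]
  simp_rw [Set.indicator_mul_left]
  exact lintegral_mul_eq_lintegral_mul_lintegral_of_independent_measurableSpace hm hm'
    hind.symm (hf.indicator hs) hg

lemma lintegral_ofReal_le_of_integral_le {f : Ω → ℝ} (hf : AEStronglyMeasurable f P)
    (hf₀ : 0 ≤ᵐ[P] f) (hfin : ∫⁻ ω, ENNReal.ofReal (f ω) ∂P ≠ ∞) {c : ℝ}
    (h : ∫ ω, f ω ∂P ≤ c) : ∫⁻ ω, ENNReal.ofReal (f ω) ∂P ≤ ENNReal.ofReal c := by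
  rw [← ofReal_integral_eq_lintegral_ofReal
    ((lintegral_ofReal_ne_top_iff_integrable hf hf₀).1 hfin) hf₀]
  exact ENNReal.ofReal_le_ofReal h

lemma condExp_ae_le_of_forall_setLIntegral_le [IsFiniteMeasure P] (hm : m ≤ mΩ)
    {f g : Ω → ℝ} (hf : Integrable f P) (hf₀ : 0 ≤ᵐ[P] f) (hg : Measurable[m] g)
    (hg₀ : 0 ≤ᵐ[P] g)
    (h : ∀ s, MeasurableSet[m] s →
      ∫⁻ ω in s, ENNReal.ofReal (f ω) ∂P ≤ ∫⁻ ω in s, ENNReal.ofReal (g ω) ∂P) :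
    P[f|m] ≤ᵐ[P] g := by
  have hcond : Measurable[m] fun ω => ENNReal.ofReal (P[f|m] ω) :=
    stronglyMeasurable_condExp.measurable.ennreal_ofReal
  have htrim : (fun ω => ENNReal.ofReal (P[f|m] ω)) ≤ᵐ[P.trim hm]
      fun ω => ENNReal.ofReal (g ω) := by
    refine ae_le_of_forall_setLIntegral_le_of_sigmaFinite hcond fun s hs _ => ?_
    rw [restrict_trim hm P hs, lintegral_trim hm hcond, lintegral_trim hm hg.ennreal_ofReal,
      ← ofReal_integral_eq_lintegral_ofReal integrable_condExp.restrict
        (ae_restrict_of_ae (condExp_nonneg hf₀)),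
      setIntegral_condExp hm hf hs, ofReal_integral_eq_lintegral_ofReal hf.restrict
        (ae_restrict_of_ae hf₀)]
    exact h s hs
  filter_upwards [ae_of_ae_trim hm htrim, hg₀] with ω hω hgω
  exact (ENNReal.ofReal_le_ofReal_iff hgω).1 hω

end Integration

section Amgf

variable {E : Type*} [NormedAddCommGroup E] [InnerProductSpace ℝ E] [MeasurableSpace E]

/-- The paper's `Φ_{n,λ}` when `E = ℝⁿ` and `μ` is the uniform distribution on its unit sphere. -/
noncomputable def amgf (μ : Measure E) (lam : ℝ) (x : E) : ℝ := ∫ u, exp (lam * ⟪u, x⟫) ∂μ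

variable {μ : Measure E} {lam : ℝ}

lemma amgf_nonneg (x : E) : 0 ≤ amgf μ lam x := integral_nonneg fun _ => (exp_pos _).le

section Monotonicity

variable [BorelSpace E]

lemma amgf_linearIsometryEquiv_apply
    (hrot : ∀ e : E ≃ₗᵢ[ℝ] E, μ.map e = μ) (e : E ≃ₗᵢ[ℝ] E) (x : E) :
    amgf μ lam (e x) = amgf μ lam x := by
  conv_lhs => rw [amgf, ← hrot e]
  rw [integral_map e.continuous.aemeasurable (by fun_prop : Continuous fun u : E =>
    exp (lam * ⟪u, e x⟫)).aestronglyMeasurable]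
  simp only [LinearIsometryEquiv.inner_map_map, amgf]

lemma amgf_eq_of_norm_eq (hrot : ∀ e : E ≃ₗᵢ[ℝ] E, μ.map e = μ) {x y : E} (h : ‖x‖ = ‖y‖) :
    amgf μ lam x = amgf μ lam y := by
  rw [← Submodule.reflection_sub h, amgf_linearIsometryEquiv_apply hrot]

variable [IsFiniteMeasure μ]

lemma integrable_exp_inner (hsupp : ∀ᵐ u ∂μ, ‖u‖ = 1) (x : E) :
    Integrable (fun u => exp (lam * ⟪u, x⟫)) μ := by
  refine .mono' (integrable_const (exp (|lam| * ‖x‖)))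
    (by fun_prop : Continuous fun u : E => exp (lam * ⟪u, x⟫)).aestronglyMeasurable ?_
  filter_upwards [hsupp] with u hu
  rw [norm_of_nonneg (exp_pos _).le, exp_le_exp]
  calc lam * ⟪u, x⟫ ≤ |lam| * |⟪u, x⟫| := (le_abs_self _).trans (abs_mul _ _).le
    _ ≤ |lam| * ‖x‖ := by
      gcongr
      simpa [hu] using abs_real_inner_le_norm u x

lemma ofReal_amgf (hsupp : ∀ᵐ u ∂μ, ‖u‖ = 1) (x : E) :
    ENNReal.ofReal (amgf μ lam x) = ∫⁻ u, ENNReal.ofReal (exp (lam * ⟪u, x⟫)) ∂μ :=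
  ofReal_integral_eq_lintegral_ofReal (integrable_exp_inner hsupp x)
    (.of_forall fun _ => (exp_pos _).le)

lemma integrable_cosh_inner (hsupp : ∀ᵐ u ∂μ, ‖u‖ = 1) (x : E) :
    Integrable (fun u => cosh (lam * ⟪u, x⟫)) μ := by
  simp only [cosh_eq, ← mul_neg, ← inner_neg_right]
  exact ((integrable_exp_inner hsupp x).add (integrable_exp_inner hsupp (-x))).div_const 2

lemma amgf_eq_integral_cosh (hsupp : ∀ᵐ u ∂μ, ‖u‖ = 1)
    (hrot : ∀ e : E ≃ₗᵢ[ℝ] E, μ.map e = μ) (x : E) :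
    amgf μ lam x = ∫ u, cosh (lam * ⟪u, x⟫) ∂μ := by
  have hneg : amgf μ lam (-x) = amgf μ lam x := amgf_linearIsometryEquiv_apply hrot (.neg ℝ) x
  simp only [cosh_eq, ← mul_neg, ← inner_neg_right]
  rw [integral_div, integral_add (integrable_exp_inner hsupp x) (integrable_exp_inner hsupp (-x))]
  change _ = (amgf μ lam x + amgf μ lam (-x)) / 2
  rw [hneg]
  ring

lemma amgf_smul_le (hsupp : ∀ᵐ u ∂μ, ‖u‖ = 1) (hrot : ∀ e : E ≃ₗᵢ[ℝ] E, μ.map e = μ)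
    {r : ℝ} (hr₀ : 0 ≤ r) (hr₁ : r ≤ 1) (x : E) :
    amgf μ lam (r • x) ≤ amgf μ lam x := by
  rw [amgf_eq_integral_cosh hsupp hrot, amgf_eq_integral_cosh hsupp hrot]
  refine integral_mono (integrable_cosh_inner hsupp _) (integrable_cosh_inner hsupp _)
    fun u => cosh_le_cosh.2 ?_
  rw [inner_smul_right, mul_left_comm, abs_mul, abs_of_nonneg hr₀]
  exact mul_le_of_le_one_left (abs_nonneg _) hr₁

lemma amgf_mono (hsupp : ∀ᵐ u ∂μ, ‖u‖ = 1) (hrot : ∀ e : E ≃ₗᵢ[ℝ] E, μ.map e = μ)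
    {x y : E} (h : ‖x‖ ≤ ‖y‖) : amgf μ lam x ≤ amgf μ lam y := by
  have hr : ‖(‖x‖ / ‖y‖) • y‖ = ‖x‖ := by
    rcases (norm_nonneg y).eq_or_lt with hy | hy
    · simp [← hy, le_antisymm (hy ▸ h) (norm_nonneg x)]
    · rw [norm_smul, norm_div, norm_norm, norm_norm, div_mul_cancel₀ _ hy.ne']
  rw [amgf_eq_of_norm_eq hrot hr.symm]
  exact amgf_smul_le hsupp hrot (by positivity) (div_le_one_of_le₀ h (norm_nonneg y)) y

end Monotonicity

section Decoupling

variable [SecondCountableTopology E] [BorelSpace E]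

lemma measurable_amgf [SFinite μ] : Measurable (amgf μ lam) :=
  (StronglyMeasurable.integral_prod_right (by fun_prop : Measurable fun p : E × E =>
    exp (lam * ⟪p.2, p.1⟫)).stronglyMeasurable).measurable

variable {Ω : Type*} {m mΩ : MeasurableSpace Ω} {P : Measure Ω} {β w : Ω → E}

lemma setLIntegral_ofReal_amgf_add [IsFiniteMeasure μ] [SFinite P] (hsupp : ∀ᵐ u ∂μ, ‖u‖ = 1)
    (hm : m ≤ mΩ) (hβ : Measurable[m] β) (hw : Measurable w)
    (hind : Indep (MeasurableSpace.comap w inferInstance) m P)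
    {s : Set Ω} (hs : MeasurableSet[m] s) :
    ∫⁻ ω in s, ENNReal.ofReal (amgf μ lam (β ω + w ω)) ∂P
      = ∫⁻ u, (∫⁻ ω in s, ENNReal.ofReal (exp (lam * ⟪u, β ω⟫)) ∂P)
          * ∫⁻ ω, ENNReal.ofReal (exp (lam * ⟪u, w ω⟫)) ∂P ∂μ := by
  have hβ' : Measurable β := hβ.mono hm le_rfl
  calc ∫⁻ ω in s, ENNReal.ofReal (amgf μ lam (β ω + w ω)) ∂P
      = ∫⁻ ω in s, ∫⁻ u, ENNReal.ofReal (exp (lam * ⟪u, β ω⟫))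
          * ENNReal.ofReal (exp (lam * ⟪u, w ω⟫)) ∂μ ∂P := by
        refine lintegral_congr fun ω => ?_
        rw [ofReal_amgf hsupp]
        refine lintegral_congr fun u => ?_
        rw [← ENNReal.ofReal_mul (exp_pos _).le, ← exp_add, inner_add_right, mul_add]
    _ = ∫⁻ u, ∫⁻ ω in s, ENNReal.ofReal (exp (lam * ⟪u, β ω⟫))
          * ENNReal.ofReal (exp (lam * ⟪u, w ω⟫)) ∂P ∂μ :=
        lintegral_lintegral_swap (by fun_prop : Measurable fun p : Ω × E =>
          ENNReal.ofReal (exp (lam * ⟪p.2, β p.1⟫))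
            * ENNReal.ofReal (exp (lam * ⟪p.2, w p.1⟫))).aemeasurable
    _ = _ := lintegral_congr fun u => setLIntegral_mul_eq_of_indep hm hw.comap_le hind
        (by fun_prop) ((by fun_prop : Measurable fun y : E =>
          ENNReal.ofReal (exp (lam * ⟪u, y⟫))).comp (comap_measurable w)) hs

/-- The hypothesis on `w` bounds a Bochner integral, which is `0` when `exp (lam * ⟪u, w ·⟫)` is
not integrable; integrability of `amgf μ lam (β + w)` excludes this for `μ`-almost every `u`. -/
lemma ae_lintegral_exp_inner_lt_top [IsFiniteMeasure μ] [SFinite P] [NeZero P]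
    (hsupp : ∀ᵐ u ∂μ, ‖u‖ = 1) (hm : m ≤ mΩ) (hβ : Measurable[m] β) (hw : Measurable w)
    (hind : Indep (MeasurableSpace.comap w inferInstance) m P)
    (hint : Integrable (fun ω => amgf μ lam (β ω + w ω)) P) :
    ∀ᵐ u ∂μ, ∫⁻ ω, ENNReal.ofReal (exp (lam * ⟪u, w ω⟫)) ∂P < ∞ := by
  have hβ' : Measurable β := hβ.mono hm le_rfl
  have htot := setLIntegral_ofReal_amgf_add (lam := lam) hsupp hm hβ hw hind MeasurableSet.univ
  simp only [Measure.restrict_univ] at htot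
  have hmeas : Measurable fun u => (∫⁻ ω, ENNReal.ofReal (exp (lam * ⟪u, β ω⟫)) ∂P)
      * ∫⁻ ω, ENNReal.ofReal (exp (lam * ⟪u, w ω⟫)) ∂P := by
    fun_prop
  filter_upwards [ae_lt_top hmeas (htot ▸ hint.lintegral_lt_top).ne] with u hu
  refine ENNReal.lt_top_of_mul_ne_top_right hu.ne ?_
  rw [Ne, lintegral_eq_zero_iff (by fun_prop)]
  intro h
  obtain ⟨ω, hω⟩ := h.exists
  exact (ENNReal.ofReal_pos.2 (exp_pos _)).ne' hω

lemma setLIntegral_ofReal_amgf_add_le [IsFiniteMeasure μ] [SFinite P] [NeZero P]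
    (hsupp : ∀ᵐ u ∂μ, ‖u‖ = 1) (hm : m ≤ mΩ) (hβ : Measurable[m] β) (hw : Measurable w)
    (hind : Indep (MeasurableSpace.comap w inferInstance) m P) {c : ℝ}
    (hsub : ∀ u : E, ‖u‖ = 1 → ∫ ω, exp (lam * ⟪u, w ω⟫) ∂P ≤ c)
    (hint : Integrable (fun ω => amgf μ lam (β ω + w ω)) P) {s : Set Ω}
    (hs : MeasurableSet[m] s) :
    ∫⁻ ω in s, ENNReal.ofReal (amgf μ lam (β ω + w ω)) ∂P
      ≤ ENNReal.ofReal c * ∫⁻ ω in s, ENNReal.ofReal (amgf μ lam (β ω)) ∂P := by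
  have hβ' : Measurable β := hβ.mono hm le_rfl
  have hmgf : ∀ᵐ u ∂μ, ∫⁻ ω, ENNReal.ofReal (exp (lam * ⟪u, w ω⟫)) ∂P ≤ ENNReal.ofReal c := by
    filter_upwards [hsupp, ae_lintegral_exp_inner_lt_top hsupp hm hβ hw hind hint]
      with u hu hfin
    exact lintegral_ofReal_le_of_integral_le (by fun_prop) (.of_forall fun _ => (exp_pos _).le)
      hfin.ne (hsub u hu)
  calc ∫⁻ ω in s, ENNReal.ofReal (amgf μ lam (β ω + w ω)) ∂P
      = ∫⁻ u, (∫⁻ ω in s, ENNReal.ofReal (exp (lam * ⟪u, β ω⟫)) ∂P)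
          * ∫⁻ ω, ENNReal.ofReal (exp (lam * ⟪u, w ω⟫)) ∂P ∂μ :=
        setLIntegral_ofReal_amgf_add hsupp hm hβ hw hind hs
    _ ≤ ∫⁻ u, (∫⁻ ω in s, ENNReal.ofReal (exp (lam * ⟪u, β ω⟫)) ∂P) * ENNReal.ofReal c ∂μ :=
        lintegral_mono_ae (hmgf.mono fun u hu => by gcongr)
    _ = ENNReal.ofReal c * ∫⁻ ω in s, ∫⁻ u, ENNReal.ofReal (exp (lam * ⟪u, β ω⟫)) ∂μ ∂P := by
        rw [lintegral_mul_const' _ _ ENNReal.ofReal_ne_top, mul_comm,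
          lintegral_lintegral_swap (by fun_prop : Measurable fun p : E × Ω =>
            ENNReal.ofReal (exp (lam * ⟪p.1, β p.2⟫))).aemeasurable]
    _ = ENNReal.ofReal c * ∫⁻ ω in s, ENNReal.ofReal (amgf μ lam (β ω)) ∂P := by
        simp_rw [ofReal_amgf hsupp]

theorem condExp_amgf_add_le [IsFiniteMeasure μ] [IsProbabilityMeasure P]
    (hsupp : ∀ᵐ u ∂μ, ‖u‖ = 1) (hm : m ≤ mΩ) (hβ : Measurable[m] β) (hw : Measurable w)
    (hind : Indep (MeasurableSpace.comap w inferInstance) m P) {c : ℝ} (hc : 0 ≤ c)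
    (hsub : ∀ u : E, ‖u‖ = 1 → ∫ ω, exp (lam * ⟪u, w ω⟫) ∂P ≤ c) :
    P[fun ω => amgf μ lam (β ω + w ω)|m] ≤ᵐ[P] fun ω => c * amgf μ lam (β ω) := by
  by_cases hint : Integrable (fun ω => amgf μ lam (β ω + w ω)) P
  · refine condExp_ae_le_of_forall_setLIntegral_le hm hint (.of_forall fun _ => amgf_nonneg _)
      ((measurable_amgf.comp hβ).const_mul c)
      (.of_forall fun _ => mul_nonneg hc (amgf_nonneg _)) fun s hs => ?_
    simp_rw [ENNReal.ofReal_mul hc]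
    rw [lintegral_const_mul' _ _ ENNReal.ofReal_ne_top]
    exact setLIntegral_ofReal_amgf_add_le hsupp hm hβ hw hind hsub hint hs
  · rw [condExp_of_not_integrable hint]
    exact .of_forall fun _ => mul_nonneg hc (amgf_nonneg _)

end Decoupling

end Amgf

theorem amgf_energy_affine_martingale_general
    {n : ℕ} (μsph : Measure (EuclideanSpace ℝ (Fin n))) [IsProbabilityMeasure μsph]
    (hsupp : ∀ᵐ ℓ ∂μsph, ‖ℓ‖ = 1)
    (hrot : ∀ e : EuclideanSpace ℝ (Fin n) ≃ₗᵢ[ℝ] EuclideanSpace ℝ (Fin n),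
      μsph.map e = μsph)
    {Ω : Type*} {mΩ : MeasurableSpace Ω} (P : Measure Ω) [IsProbabilityMeasure P]
    (ℱ : Filtration ℕ mΩ) (σ lam : ℝ)
    (S β w : ℕ → Ω → EuclideanSpace ℝ (Fin n))
    (hrec : ∀ t ω, S (t + 1) ω = β t ω + w t ω)
    (hβad : ∀ t, StronglyMeasurable[ℱ t] (β t))
    (hβ : ∀ t, ∀ᵐ ω ∂P, ‖β t ω‖ ≤ ‖S t ω‖)
    (hwm : ∀ t, Measurable (w t))
    (hwind : ∀ t, Indep (MeasurableSpace.comap (w t) inferInstance) (ℱ t) P)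
    (hwsub : ∀ t, ∀ ℓ : EuclideanSpace ℝ (Fin n), ‖ℓ‖ = 1 → ∀ l : ℝ,
      ∫ ω, Real.exp (l * ⟪ℓ, w t ω⟫) ∂P ≤ Real.exp (l ^ 2 * σ ^ 2 / 2)) :
    ∀ t, P[fun ω => ∫ u, Real.exp (lam * ⟪u, S (t + 1) ω⟫) ∂μsph|ℱ t]
      ≤ᵐ[P] fun ω =>
        Real.exp (lam ^ 2 * σ ^ 2 / 2) * ∫ u, Real.exp (lam * ⟪u, S t ω⟫) ∂μsph := by
  intro t
  have hdecouple : P[fun ω => amgf μsph lam (S (t + 1) ω)|ℱ t]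
      ≤ᵐ[P] fun ω => exp (lam ^ 2 * σ ^ 2 / 2) * amgf μsph lam (β t ω) := by
    simp only [hrec]
    exact condExp_amgf_add_le hsupp (ℱ.le t) (hβad t).measurable (hwm t) (hwind t)
      (exp_pos _).le fun u hu => hwsub t u hu lam
  filter_upwards [hdecouple, hβ t] with ω hω hβω
  exact hω.trans (mul_le_mul_of_nonneg_left (amgf_mono hsupp hrot hβω) (exp_pos _).le)

/-- The AMGF energy of the deviation process `S_{t+1} = β_t + w_t` with
`‖β_t‖ ≤ ‖S_t‖` and `w_t ∼ subG(σ²)` independent of the history is an affine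
martingale: `E[Φ_{n,λ}(S_{t+1}) | ℱ_t] ≤ exp(λ²σ²/2) Φ_{n,λ}(S_t)`. -/
theorem amgf_energy_affine_martingale
    {n : ℕ} (μsph : Measure (EuclideanSpace ℝ (Fin n))) [IsProbabilityMeasure μsph]
    (hsupp : ∀ᵐ ℓ ∂μsph, ‖ℓ‖ = 1)
    (hrot : ∀ e : EuclideanSpace ℝ (Fin n) ≃ₗᵢ[ℝ] EuclideanSpace ℝ (Fin n),
      μsph.map e = μsph)
    {Ω : Type*} {mΩ : MeasurableSpace Ω} (P : Measure Ω) [IsProbabilityMeasure P]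
    (ℱ : Filtration ℕ mΩ) (σ lam : ℝ)
    (S β w : ℕ → Ω → EuclideanSpace ℝ (Fin n))
    (hS0 : ∀ ω, S 0 ω = 0)
    (hrec : ∀ t ω, S (t + 1) ω = β t ω + w t ω)
    (hSad : ∀ t, StronglyMeasurable[ℱ t] (S t))
    (hβad : ∀ t, StronglyMeasurable[ℱ t] (β t))
    (hβ : ∀ t, ∀ᵐ ω ∂P, ‖β t ω‖ ≤ ‖S t ω‖)
    (hwm : ∀ t, Measurable (w t))
    (hwind : ∀ t, Indep (MeasurableSpace.comap (w t) inferInstance) (ℱ t) P)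
    (hwmean : ∀ t, ∫ ω, w t ω ∂P = 0)
    (hwsub : ∀ t, ∀ ℓ : EuclideanSpace ℝ (Fin n), ‖ℓ‖ = 1 → ∀ l : ℝ,
      ∫ ω, Real.exp (l * ⟪ℓ, w t ω⟫) ∂P ≤ Real.exp (l ^ 2 * σ ^ 2 / 2)) :
    ∀ t, P[fun ω => ∫ u, Real.exp (lam * ⟪u, S (t + 1) ω⟫) ∂μsph|ℱ t]
      ≤ᵐ[P] fun ω =>
        Real.exp (lam ^ 2 * σ ^ 2 / 2) * ∫ u, Real.exp (lam * ⟪u, S t ω⟫) ∂μsph :=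
  amgf_energy_affine_martingale_general μsph hsupp hrot P ℱ σ lam S β w hrec hβad hβ hwm hwind hwsub
end

section
/- Let L ∈ (0,1), σ > 0, δ ∈ (0,1), ε ∈ (0,1), T ∈ N, and Δt ∈ {1,…,T} dividing T with N = T/Δt. Suppose events F_k^{(1)} (‖X_{kΔt} − x_{kΔt}‖ ≤ r_{kΔt} with r_{kΔt} = σ sqrt(((L^{2kΔt}−1)/(L²−1))(ε₁n + ε₂ log(2N/δ)))) and F_k^{(2)} (per-interval tube bounds of size r^Δ = σ sqrt(((L^{−2(Δt−1)}−1)/(L^{−2}−1))(ε₁n + ε₂ log(2N/δ)))) each hold with probability at least 1 − δ/(2N), and on their joint intersection for t ∈ (kΔt,(k+1)Δt) one has ‖X_t − x_t‖ ≤ ‖X_{kΔt} − x_{kΔt}‖ + ‖X_t − x̄_{t,k}‖ by contractivity. Then P(‖X_t − x_t‖ ≤ σ(sqrt((L^{2t}−1)/(L²−1)) + sqrt((L^{−2(Δt−1)}−1)/(L^{−2}−1)))·sqrt(ε₁n + ε₂ log(2T/(δΔt))) for all t ≤ T) ≥ 1 − δ. -/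
/-!
Intersect the 2N events: N endpoint bounds and N per-interval bounds, each failing with
probability at most δ/(2N), so by the union bound they hold simultaneously with probability at
least 1 − δ. On that intersection, write t ∈ [kΔt, (k+1)Δt). The endpoint radius at kΔt is at
most the one at t, because (L^(2u) − 1)/(L² − 1) = ∑_{i<u} L^(2i) grows with u, and
contractivity adds at most the per-interval radius. Since T = NΔt, the two logarithms agree.
-/

open MeasureTheory Real Finset

section GeomCoeff

variable {K : Type*} [Field K] [LinearOrder K] [IsStrictOrderedRing K] {a : K}

theorem monotone_pow_sub_one_div_sub_one (ha : 0 ≤ a) :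
    Monotone fun u : ℕ => (a ^ u - 1) / (a - 1) := by
  rcases eq_or_ne a 1 with rfl | ha1
  · simp [monotone_const]
  · intro u v huv
    simp only [← geom_sum_eq ha1]
    exact sum_le_sum_of_subset_of_nonneg (range_mono huv) fun i _ _ => pow_nonneg ha i

theorem pow_sub_one_div_sub_one_nonneg (ha : 0 ≤ a) (u : ℕ) : 0 ≤ (a ^ u - 1) / (a - 1) := by
  simpa using monotone_pow_sub_one_div_sub_one ha (Nat.zero_le u)

end GeomCoeff

theorem zpow_neg_two_mul_sub_one_div_nonneg (L : ℝ) {m : ℕ} (hm : 1 ≤ m) :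
    0 ≤ (L ^ (-2 * ((m : ℤ) - 1)) - 1) / (L ^ (-2 : ℤ) - 1) := by
  rw [show L ^ (-2 * ((m : ℤ) - 1)) = (L ^ (-2 : ℤ)) ^ (m - 1) by
    rw [← zpow_natCast, ← zpow_mul, Nat.cast_sub hm, Nat.cast_one]]
  exact pow_sub_one_div_sub_one_nonneg (even_two.neg.zpow_nonneg L) _

theorem one_sub_card_mul_le_measureReal_biInter {Ω ι : Type*} [MeasurableSpace Ω]
    (μ : Measure Ω) [IsProbabilityMeasure μ] {s : Finset ι} {F : ι → Set Ω} {η : ℝ}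
    (hF : ∀ i ∈ s, MeasurableSet (F i)) (hη : ∀ i ∈ s, 1 - η ≤ μ.real (F i)) :
    1 - #s * η ≤ μ.real (⋂ i ∈ s, F i) := by
  have hunion : μ.real (⋃ i ∈ s, (F i)ᶜ) ≤ #s * η := calc
    _ ≤ ∑ i ∈ s, μ.real (F i)ᶜ := measureReal_biUnion_finset_le _ _
    _ ≤ ∑ _i ∈ s, η := sum_le_sum fun i hi => by
      rw [probReal_compl_eq_one_sub (hF i hi)]; linarith [hη i hi]
    _ = #s * η := by rw [sum_const, nsmul_eq_mul]
  have hcover : 1 ≤ μ.real (⋂ i ∈ s, F i) + μ.real (⋃ i ∈ s, (F i)ᶜ) := by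
    rw [← Set.compl_iInter₂, ← probReal_univ (μ := μ), ← Set.union_compl_self (⋂ i ∈ s, F i)]
    exact measureReal_union_le _ _
  linarith

theorem one_sub_card_add_card_mul_le_measureReal_inter {Ω ι κ : Type*} [MeasurableSpace Ω]
    (μ : Measure Ω) [IsProbabilityMeasure μ] {s : Finset ι} {t : Finset κ} {F : ι → Set Ω}
    {G : κ → Set Ω} {η : ℝ} (hF : ∀ i ∈ s, MeasurableSet (F i))
    (hG : ∀ j ∈ t, MeasurableSet (G j)) (hFη : ∀ i ∈ s, 1 - η ≤ μ.real (F i))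
    (hGη : ∀ j ∈ t, 1 - η ≤ μ.real (G j)) :
    1 - (#s + #t) * η ≤ μ.real ((⋂ i ∈ s, F i) ∩ ⋂ j ∈ t, G j) := by
  have h := one_sub_card_mul_le_measureReal_biInter μ (s := s.disjSum t) (F := Sum.elim F G)
    (by rintro (i | j) h; exacts [hF i (inl_mem_disjSum.1 h), hG j (inr_mem_disjSum.1 h)])
    (by rintro (i | j) h; exacts [hFη i (inl_mem_disjSum.1 h), hGη j (inr_mem_disjSum.1 h)])
  convert h using 3
  · rw [card_disjSum, Nat.cast_add]
  · ext ω
    simp only [Set.mem_inter_iff, Set.mem_iInter, Sum.forall, inl_mem_disjSum, inr_mem_disjSum,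
      Sum.elim_inl, Sum.elim_inr]

theorem le_add_of_le_on_grid {e g : ℕ → ℝ} {Δt N : ℕ} {ρ : ℝ} (hΔt : 0 < Δt)
    (hg : Monotone g) (hρ : 0 ≤ ρ) (hgrid : ∀ k ≤ N, e (k * Δt) ≤ g (k * Δt))
    (hcell : ∀ k < N, ∀ t, k * Δt < t → t < (k + 1) * Δt → e t ≤ e (k * Δt) + ρ) :
    ∀ t ≤ N * Δt, e t ≤ g t + ρ := by
  intro t ht
  set k := t / Δt
  have hkt : k * Δt ≤ t := Nat.div_mul_le_self t Δt
  have htk : t < (k + 1) * Δt := by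
    rw [add_mul, one_mul]; exact Nat.lt_div_mul_add hΔt
  rcases hkt.eq_or_lt with heq | hlt
  · have hkN : k ≤ N := Nat.le_of_mul_le_mul_right (heq ▸ ht) hΔt
    have := hgrid k hkN
    rw [heq] at this
    linarith
  · have hkN : k < N := by
      by_contra! h
      have := Nat.mul_le_mul_right Δt h
      omega
    linarith [hcell k hkN t hlt htk, hgrid k hkN.le, hg hkt]

theorem modified_probabilistic_tube_DT_contractive_general
    {n : ℕ} {Ω : Type*} [MeasurableSpace Ω] (μ : Measure Ω) [IsProbabilityMeasure μ]
    (L σ δ : ℝ) (hσ : 0 < σ)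
    (T Δt N : ℕ) (hΔ1 : 1 ≤ Δt)
    (hN : 0 < N) (hdiv : T = N * Δt)
    (ε₁ ε₂ : ℝ)
    (X : ℕ → Ω → EuclideanSpace ℝ (Fin n)) (x : ℕ → EuclideanSpace ℝ (Fin n))
    (xbar : ℕ → ℕ → Ω → EuclideanSpace ℝ (Fin n))
    (hX0 : ∀ ω, X 0 ω = x 0)
    (rk : ℕ → ℝ)
    (hrk : ∀ k, rk k = σ * Real.sqrt
      (((L ^ (2 * (k * Δt)) - 1) / (L ^ 2 - 1)) * (ε₁ * n + ε₂ * Real.log (2 * N / δ))))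
    (rΔ : ℝ)
    (hrΔ : rΔ = σ * Real.sqrt
      (((L ^ (-2 * ((Δt : ℤ) - 1)) - 1) / (L ^ (-2 : ℤ) - 1))
        * (ε₁ * n + ε₂ * Real.log (2 * N / δ))))
    (hF1m : ∀ k, MeasurableSet {ω | ‖X (k * Δt) ω - x (k * Δt)‖ ≤ rk k})
    (hF2m : ∀ k, MeasurableSet {ω | ∀ t, k * Δt < t → t < (k + 1) * Δt →
      ‖X t ω - xbar k t ω‖ ≤ rΔ})
    (hF1 : ∀ k, 1 ≤ k → k ≤ N →
      1 - δ / (2 * N) ≤ (μ {ω | ‖X (k * Δt) ω - x (k * Δt)‖ ≤ rk k}).toReal)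
    (hF2 : ∀ k, k < N →
      1 - δ / (2 * N) ≤ (μ {ω | ∀ t, k * Δt < t → t < (k + 1) * Δt →
        ‖X t ω - xbar k t ω‖ ≤ rΔ}).toReal)
    (htri : ∀ ω, ∀ k < N, ∀ t, k * Δt < t → t < (k + 1) * Δt →
      ‖X t ω - x t‖ ≤ ‖X (k * Δt) ω - x (k * Δt)‖ + ‖X t ω - xbar k t ω‖) :
    1 - δ ≤ (μ {ω | ∀ t ≤ T,
        ‖X t ω - x t‖ ≤ σ * (Real.sqrt ((L ^ (2 * t) - 1) / (L ^ 2 - 1))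
            + Real.sqrt ((L ^ (-2 * ((Δt : ℤ) - 1)) - 1) / (L ^ (-2 : ℤ) - 1)))
          * Real.sqrt (ε₁ * n + ε₂ * Real.log (2 * T / (δ * Δt)))}).toReal := by
  set S := ε₁ * n + ε₂ * Real.log (2 * N / δ)
  set A : ℕ → ℝ := fun t => (L ^ (2 * t) - 1) / (L ^ 2 - 1)
  set B := (L ^ (-2 * ((Δt : ℤ) - 1)) - 1) / (L ^ (-2 : ℤ) - 1)
  have hS : ε₁ * n + ε₂ * Real.log (2 * T / (δ * Δt)) = S := by
    rw [hdiv, Nat.cast_mul, ← mul_assoc, mul_div_mul_right _ _ (by positivity)]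
  have hA : Monotone A := fun u v huv => by
    simpa only [A, pow_mul] using monotone_pow_sub_one_div_sub_one (sq_nonneg L) huv
  have hA0 (u : ℕ) : 0 ≤ A u := by
    simpa only [A, pow_mul] using pow_sub_one_div_sub_one_nonneg (sq_nonneg L) u
  have hrΔ' : rΔ = σ * √B * √S := by
    rw [hrΔ, sqrt_mul (zpow_neg_two_mul_sub_one_div_nonneg L hΔ1), mul_assoc]
  have hprob := one_sub_card_add_card_mul_le_measureReal_inter μ (s := Icc 1 N) (t := range N)
    (fun k _ => hF1m k) (fun k _ => hF2m k)
    (fun k hk => hF1 k (mem_Icc.1 hk).1 (mem_Icc.1 hk).2) (fun k hk => hF2 k (mem_range.1 hk))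
  refine le_trans (le_of_eq ?_) (hprob.trans (measureReal_mono ?_))
  · rw [Nat.card_Icc, card_range, Nat.add_sub_cancel]
    field_simp
    ring
  rintro ω ⟨hω1, hω2⟩ t ht
  simp only [Set.mem_iInter, mem_Icc, mem_range] at hω1 hω2
  rw [hS, show σ * (√(A t) + √B) * √S = σ * √(A t) * √S + rΔ by rw [hrΔ']; ring]
  refine le_add_of_le_on_grid (e := fun t => ‖X t ω - x t‖) (g := fun t => σ * √(A t) * √S)
    hΔ1 (fun u v huv => by dsimp only; gcongr; exact hA huv) (by rw [hrΔ']; positivity)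
    (fun k hk => ?_) (fun k hk t hkt htk => ?_) t (hdiv ▸ ht)
  · rcases k.eq_zero_or_pos with rfl | hk0
    · simp only [zero_mul, hX0, sub_self, norm_zero]
      positivity
    · exact (hω1 k ⟨hk0, hk⟩).trans_eq (by rw [hrk, sqrt_mul (hA0 (k * Δt)), mul_assoc])
  · linarith [htri ω k hk t hkt htk, hω2 k hk t hkt htk]

/-- Modified probabilistic tube for contractive discrete-time systems
(union-bound combination step): given the per-endpoint events `F_k^{(1)}` and
per-interval events `F_k^{(2)}`, each of probability at least `1 − δ/(2N)`,
and the triangle/contractivity estimate on their intersection, the trajectory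
stays in the combined tube with probability at least `1 − δ`. -/
theorem modified_probabilistic_tube_DT_contractive
    {n : ℕ} {Ω : Type*} [MeasurableSpace Ω] (μ : Measure Ω) [IsProbabilityMeasure μ]
    (L σ δ ε : ℝ) (hL : L ∈ Set.Ioo (0 : ℝ) 1) (hσ : 0 < σ)
    (hδ : δ ∈ Set.Ioo (0 : ℝ) 1) (hε : ε ∈ Set.Ioo (0 : ℝ) 1)
    (T Δt N : ℕ) (hT : 0 < T) (hΔ1 : 1 ≤ Δt) (hΔT : Δt ≤ T)
    (hN : 0 < N) (hdiv : T = N * Δt)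
    (ε₁ ε₂ : ℝ)
    (hε₁ : ε₁ = Real.log (1 / (1 - ε ^ 2)) / ε ^ 2) (hε₂ : ε₂ = 2 / ε ^ 2)
    (X : ℕ → Ω → EuclideanSpace ℝ (Fin n)) (x : ℕ → EuclideanSpace ℝ (Fin n))
    (xbar : ℕ → ℕ → Ω → EuclideanSpace ℝ (Fin n))
    (hX0 : ∀ ω, X 0 ω = x 0)
    (rk : ℕ → ℝ)
    (hrk : ∀ k, rk k = σ * Real.sqrt
      (((L ^ (2 * (k * Δt)) - 1) / (L ^ 2 - 1)) * (ε₁ * n + ε₂ * Real.log (2 * N / δ))))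
    (rΔ : ℝ)
    (hrΔ : rΔ = σ * Real.sqrt
      (((L ^ (-2 * ((Δt : ℤ) - 1)) - 1) / (L ^ (-2 : ℤ) - 1))
        * (ε₁ * n + ε₂ * Real.log (2 * N / δ))))
    (hF1m : ∀ k, MeasurableSet {ω | ‖X (k * Δt) ω - x (k * Δt)‖ ≤ rk k})
    (hF2m : ∀ k, MeasurableSet {ω | ∀ t, k * Δt < t → t < (k + 1) * Δt →
      ‖X t ω - xbar k t ω‖ ≤ rΔ})
    (hF1 : ∀ k, 1 ≤ k → k ≤ N →
      1 - δ / (2 * N) ≤ (μ {ω | ‖X (k * Δt) ω - x (k * Δt)‖ ≤ rk k}).toReal)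
    (hF2 : ∀ k, k < N →
      1 - δ / (2 * N) ≤ (μ {ω | ∀ t, k * Δt < t → t < (k + 1) * Δt →
        ‖X t ω - xbar k t ω‖ ≤ rΔ}).toReal)
    (htri : ∀ ω, ∀ k < N, ∀ t, k * Δt < t → t < (k + 1) * Δt →
      ‖X t ω - x t‖ ≤ ‖X (k * Δt) ω - x (k * Δt)‖ + ‖X t ω - xbar k t ω‖) :
    1 - δ ≤ (μ {ω | ∀ t ≤ T,
        ‖X t ω - x t‖ ≤ σ * (Real.sqrt ((L ^ (2 * t) - 1) / (L ^ 2 - 1))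
            + Real.sqrt ((L ^ (-2 * ((Δt : ℤ) - 1)) - 1) / (L ^ (-2 : ℤ) - 1)))
          * Real.sqrt (ε₁ * n + ε₂ * Real.log (2 * T / (δ * Δt)))}).toReal :=
  modified_probabilistic_tube_DT_contractive_general μ L σ δ hσ T Δt N hΔ1 hN hdiv ε₁ ε₂ X x xbar
    hX0 rk hrk rΔ hrΔ hF1m hF2m hF1 hF2 htri
end
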